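/- Let n ≥ 1, let φ be a nonzero complex-valued Schwartz function on ℝⁿ whose Fourier transform 𝓕φ is supported in the closed ball {ξ ∈ ℝⁿ : |ξ| ≤ 1/4}, and define f(x) = φ(x) · ∑_{k=1}^∞ k^{-3/2} e^{i k x₁}. Then f ∈ L¹(ℝⁿ) ∩ L²(ℝⁿ) but ∫_{ℝⁿ} |ξ₁|² |𝓕f(ξ)|² dξ = ∞; in particular f does not belong to the Sobolev space H¹(ℝⁿ). -/

import Mathlib

open MeasureTheory Real
open scoped RealInnerProductSpace ENNReal

/-- The Fourier transform with normalization `𝓕g(ξ) = (2π)^{-n/2} ∫ g(x) e^{-ix·ξ} dx`. -/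
noncomputable def fourierTr {n : ℕ} (g : EuclideanSpace ℝ (Fin n) → ℂ)
    (ξ : EuclideanSpace ℝ (Fin n)) : ℂ :=
  (((2 * π) ^ (-(n : ℝ) / 2) : ℝ) : ℂ) *
    ∫ x, g x * Complex.exp (-Complex.I * (⟪x, ξ⟫ : ℝ))

/-!
Multiplying by `exp (i ⟪x, v⟫)` translates the Fourier transform by `v`, so
`𝓕f = ∑ₖ k^{-3/2} 𝓕φ(· - k e₁)`. As `𝓕φ` lives in the ball of radius `1/4`, these translates
have disjoint supports, and on the `k`-th ball `|ξ₁| ≥ k/2`. Hence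
`∫ |ξ₁|² |𝓕f|² ≥ ∑ₖ (k/2)² k⁻³ ‖𝓕φ‖₂²`, a multiple of the harmonic series, while `‖𝓕φ‖₂ > 0`
because `φ ≠ 0`. Integrability is immediate since the series is a bounded continuous function.
-/

open scoped FourierTransform
open Metric Function

lemma norm_mul_exp_I_mul_ofReal (z : ℂ) (t : ℝ) : ‖z * Complex.exp (Complex.I * t)‖ = ‖z‖ := by
  rw [norm_mul, Complex.norm_exp_I_mul_ofReal, mul_one]

section TrigSeries

variable {E : Type*} [NormedAddCommGroup E] [InnerProductSpace ℝ E] {ι : Type*}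

noncomputable def trigSeries (c : ι → ℂ) (v : ι → E) (x : E) : ℂ :=
  ∑' k, c k * Complex.exp (Complex.I * ⟪x, v k⟫)

variable {c : ι → ℂ} (hc : Summable (‖c ·‖)) (v : ι → E)
include hc

lemma continuous_trigSeries : Continuous (trigSeries c v) :=
  continuous_tsum (fun _ => by fun_prop) hc fun _ _ => (norm_mul_exp_I_mul_ofReal _ _).le

lemma norm_trigSeries_le (x : E) : ‖trigSeries c v x‖ ≤ ∑' k, ‖c k‖ :=
  (norm_tsum_le_tsum_norm (hc.congr fun k => (norm_mul_exp_I_mul_ofReal _ ⟪x, v k⟫).symm)).trans_eq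
    (tsum_congr fun _ => norm_mul_exp_I_mul_ofReal _ _)

variable [MeasurableSpace E] [OpensMeasurableSpace E] {μ : Measure E} {g : E → ℂ}

lemma Integrable.mul_trigSeries (hg : Integrable g μ) :
    Integrable (fun x => g x * trigSeries c v x) μ :=
  hg.mul_bdd (continuous_trigSeries hc v).aestronglyMeasurable
    (ae_of_all _ (norm_trigSeries_le hc v))

lemma MemLp.mul_trigSeries {p : ℝ≥0∞} (hg : MemLp g p μ) :
    MemLp (fun x => g x * trigSeries c v x) p μ :=
  (memLp_top_of_bound (continuous_trigSeries hc v).aestronglyMeasurable _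
    (ae_of_all _ (norm_trigSeries_le hc v))).mul' hg

end TrigSeries

section Fourier

variable {n : ℕ}

lemma fourierTr_eq_fourier (g : EuclideanSpace ℝ (Fin n) → ℂ) (ξ : EuclideanSpace ℝ (Fin n)) :
    fourierTr g ξ = (((2 * π) ^ (-(n : ℝ) / 2) : ℝ) : ℂ) * 𝓕 g ((2 * π)⁻¹ • ξ) := by
  rw [fourierTr, Real.fourier_eq']
  congr 1
  refine integral_congr_ae (ae_of_all _ fun x => ?_)
  dsimp only
  rw [real_inner_smul_right, smul_eq_mul, mul_comm (g x)]
  congr 2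
  push_cast
  field_simp

lemma SchwartzMap.continuous_fourierTr (φ : SchwartzMap (EuclideanSpace ℝ (Fin n)) ℂ) :
    Continuous (fourierTr ⇑φ) := by
  simp_rw [funext (fourierTr_eq_fourier ⇑φ), ← SchwartzMap.fourier_coe]
  fun_prop

lemma SchwartzMap.fourierTr_ne_zero {φ : SchwartzMap (EuclideanSpace ℝ (Fin n)) ℂ}
    (hφ : φ ≠ 0) : fourierTr ⇑φ ≠ 0 := by
  contrapose! hφ
  have h𝓕 : 𝓕 φ = 0 := by
    ext w
    have := congr_fun hφ ((2 * π) • w)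
    rw [fourierTr_eq_fourier, smul_smul, inv_mul_cancel₀ (by positivity), one_smul] at this
    exact (mul_eq_zero.mp this).resolve_left (by norm_cast; positivity)
  simpa using congr_arg 𝓕⁻ h𝓕

lemma fourierTr_mul_trigSeries {ι : Type*} [Countable ι] {g : EuclideanSpace ℝ (Fin n) → ℂ}
    (hg : Integrable g) {c : ι → ℂ} (hc : Summable (‖c ·‖)) (v : ι → EuclideanSpace ℝ (Fin n))
    (ξ : EuclideanSpace ℝ (Fin n)) :
    fourierTr (fun x => g x * trigSeries c v x) ξ = ∑' k, c k * fourierTr g (ξ - v k) := by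
  set F : ι → EuclideanSpace ℝ (Fin n) → ℂ := fun k x =>
    c k * (g x * Complex.exp (-Complex.I * ⟪x, ξ - v k⟫))
  have hF_norm (k : ι) (x) : ‖F k x‖ = ‖c k‖ * ‖g x‖ := by
    simp [F, Complex.norm_exp]
  have hF_int (k : ι) : Integrable (F k) := by
    refine (hg.mul_bdd (c := 1) (by fun_prop) (ae_of_all _ fun x => ?_)).const_mul (c k)
    simp [Complex.norm_exp]
  have hF_sum : Summable fun k => ∫ x, ‖F k x‖ := by
    simpa only [hF_norm, integral_const_mul] using hc.mul_right (∫ x, ‖g x‖)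
  have hF (x) : g x * trigSeries c v x * Complex.exp (-Complex.I * ⟪x, ξ⟫) = ∑' k, F k x := by
    rw [trigSeries, ← tsum_mul_left, ← tsum_mul_right]
    refine tsum_congr fun k => ?_
    have hphase : -Complex.I * ⟪x, ξ - v k⟫ = Complex.I * ⟪x, v k⟫ + -Complex.I * ⟪x, ξ⟫ := by
      rw [inner_sub_right]; push_cast; ring
    simp only [F]
    rw [hphase, Complex.exp_add]
    ring
  rw [fourierTr, integral_congr_ae (ae_of_all _ hF),
    ← integral_tsum_of_summable_integral_norm hF_int hF_sum, ← tsum_mul_left]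
  refine tsum_congr fun k => ?_
  rw [integral_const_mul, fourierTr]
  ring

end Fourier

section Translates

variable {E ι : Type*} [NormedAddCommGroup E]

lemma tsum_mul_comp_sub_eq_of_mem_closedBall {F : E → ℂ} {r : ℝ}
    (hF : support F ⊆ closedBall 0 r) {v : ι → E}
    (hv : Pairwise fun j k => 2 * r < dist (v j) (v k)) (c : ι → ℂ) {k : ι} {ξ : E}
    (hξ : ξ ∈ closedBall (v k) r) : ∑' j, c j * F (ξ - v j) = c k * F (ξ - v k) := by
  refine tsum_eq_single k fun j hjk => ?_
  suffices F (ξ - v j) = 0 by rw [this, mul_zero]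
  refine notMem_support.mp fun hj => (hv hjk).not_ge ?_
  have hj' : dist ξ (v j) ≤ r := by simpa [dist_eq_norm] using hF hj
  calc dist (v j) (v k) ≤ dist ξ (v j) + dist ξ (v k) := dist_triangle_left _ _ _
    _ ≤ 2 * r := by linarith [mem_closedBall.mp hξ]

variable [MeasurableSpace E] [BorelSpace E] {μ : Measure E} [μ.IsAddRightInvariant]

lemma setLIntegral_closedBall_comp_sub {G : E → ℝ≥0∞} {r : ℝ}
    (hG : support G ⊆ closedBall 0 r) (a : E) :
    ∫⁻ ξ in closedBall a r, G (ξ - a) ∂μ = ∫⁻ ξ, G ξ ∂μ := by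
  rw [setLIntegral_eq_of_support_subset fun ξ hξ => ?_, lintegral_sub_right_eq_self]
  simpa [dist_eq_norm] using hG hξ

theorem lintegral_mul_sq_norm_tsum_translate_eq_top [Countable ι] {F : E → ℂ} {r : ℝ}
    (hF : support F ⊆ closedBall 0 r) (hF0 : ∫⁻ ξ, ENNReal.ofReal (‖F ξ‖ ^ 2) ∂μ ≠ 0)
    {v : ι → E} (hv : Pairwise fun j k => 2 * r < dist (v j) (v k)) (c : ι → ℂ)
    {w : E → ℝ} {m : ι → ℝ} (hwm : ∀ k, ∀ ξ ∈ closedBall (v k) r, m k ≤ w ξ)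
    (hm : ∑' k, ENNReal.ofReal (m k * ‖c k‖ ^ 2) = ⊤) :
    ∫⁻ ξ, ENNReal.ofReal (w ξ * ‖∑' j, c j * F (ξ - v j)‖ ^ 2) ∂μ = ⊤ := by
  set W := fun ξ => ENNReal.ofReal (w ξ * ‖∑' j, c j * F (ξ - v j)‖ ^ 2)
  have hFsq : support (fun ξ => ENNReal.ofReal (‖F ξ‖ ^ 2)) ⊆ closedBall 0 r :=
    fun ξ hξ => hF fun h => hξ (by simp [h])
  have hball (k : ι) : ENNReal.ofReal (m k * ‖c k‖ ^ 2) * ∫⁻ ξ, ENNReal.ofReal (‖F ξ‖ ^ 2) ∂μ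
      ≤ ∫⁻ ξ in closedBall (v k) r, W ξ ∂μ := by
    rw [← setLIntegral_closedBall_comp_sub hFsq (v k),
      ← lintegral_const_mul' _ _ ENNReal.ofReal_ne_top]
    refine setLIntegral_mono' measurableSet_closedBall fun ξ hξ => ?_
    simp only [W]
    rw [← ENNReal.ofReal_mul' (by positivity), tsum_mul_comp_sub_eq_of_mem_closedBall hF hv c hξ,
      norm_mul, mul_pow, ← mul_assoc]
    gcongr
    exact hwm k ξ hξ
  have hdisj : Pairwise (Disjoint on fun k => closedBall (v k) r) := fun j k hjk =>
    closedBall_disjoint_closedBall (by linarith [hv hjk])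
  refine eq_top_iff.mpr ?_
  calc ⊤ = ∑' k, ENNReal.ofReal (m k * ‖c k‖ ^ 2) * ∫⁻ ξ, ENNReal.ofReal (‖F ξ‖ ^ 2) ∂μ := by
        rw [ENNReal.tsum_mul_right, hm, ENNReal.top_mul hF0]
    _ ≤ ∑' k, ∫⁻ ξ in closedBall (v k) r, W ξ ∂μ := ENNReal.tsum_le_tsum hball
    _ = ∫⁻ ξ in ⋃ k, closedBall (v k) r, W ξ ∂μ :=
        (lintegral_iUnion (fun _ => measurableSet_closedBall) hdisj W).symm
    _ ≤ ∫⁻ ξ, W ξ ∂μ := setLIntegral_le_lintegral _ _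

end Translates

lemma Continuous.lintegral_ofReal_sq_norm_ne_zero {X F : Type*} [TopologicalSpace X]
    [MeasurableSpace X] [OpensMeasurableSpace X] {μ : Measure X} [μ.IsOpenPosMeasure]
    [NormedAddCommGroup F] {f : X → F} (hf : Continuous f) (hf0 : f ≠ 0) :
    ∫⁻ x, ENNReal.ofReal (‖f x‖ ^ 2) ∂μ ≠ 0 := by
  have hcont : Continuous fun x => ENNReal.ofReal (‖f x‖ ^ 2) :=
    ENNReal.continuous_ofReal.comp (hf.norm.pow 2)
  rw [Ne, lintegral_eq_zero_iff hcont.measurable, hcont.ae_eq_iff_eq μ continuous_zero]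
  exact fun h => hf0 (funext fun x => by simpa using congr_fun h x)

lemma one_le_dist_single_pnat {n : ℕ} (i : Fin n) :
    Pairwise fun j k : ℕ+ =>
      1 ≤ dist (EuclideanSpace.single i (j : ℝ)) (EuclideanSpace.single i (k : ℝ)) := by
  intro j k hjk
  have hjk' : ((j : ℕ) : ℤ) - (k : ℕ) ≠ 0 :=
    sub_ne_zero.mpr (by exact_mod_cast PNat.coe_injective.ne hjk)
  rw [PiLp.dist_single_same, Real.dist_eq]
  exact_mod_cast Int.one_le_abs hjk'

lemma sq_half_le_sq_apply_of_mem_closedBall {n : ℕ} (i : Fin n) {a : ℝ} (ha : 1 / 2 ≤ a)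
    {ξ : EuclideanSpace ℝ (Fin n)} (hξ : ξ ∈ closedBall (EuclideanSpace.single i a) (1 / 4)) :
    (a / 2) ^ 2 ≤ ξ i ^ 2 := by
  have h := (PiLp.norm_apply_le (ξ - EuclideanSpace.single i a) i).trans
    (mem_closedBall_iff_norm.mp hξ)
  simp only [PiLp.sub_apply, PiLp.single_apply, ↓reduceIte, Real.norm_eq_abs] at h
  nlinarith [abs_le.mp h]

lemma tsum_ofReal_inv_pnat_eq_top : ∑' k : ℕ+, ENNReal.ofReal (k : ℝ)⁻¹ = ⊤ := by
  by_contra h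
  have := ENNReal.summable_toReal h
  simp_rw [ENNReal.toReal_ofReal (inv_nonneg.mpr (Nat.cast_nonneg _))] at this
  exact Real.not_summable_natCast_inv (summable_pnat_iff_summable_nat.mp this)

lemma sq_mul_sq_rpow_neg_three_halves (k : ℝ) (hk : 0 < k) :
    (k / 2) ^ 2 * ‖((k ^ (-(3 : ℝ) / 2) : ℝ) : ℂ)‖ ^ 2 = 4⁻¹ * k⁻¹ := by
  rw [Complex.norm_real, Real.norm_of_nonneg (by positivity), ← Real.rpow_mul_natCast hk.le]
  norm_num
  field_simp
  norm_num

lemma tsum_ofReal_sq_half_mul_sq_norm_rpow_eq_top :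
    ∑' k : ℕ+, ENNReal.ofReal (((k : ℝ) / 2) ^ 2 * ‖(((k : ℝ) ^ (-(3 : ℝ) / 2) : ℝ) : ℂ)‖ ^ 2)
      = ⊤ := by
  simp_rw [sq_mul_sq_rpow_neg_three_halves _ (Nat.cast_pos.mpr (PNat.pos _)),
    ENNReal.ofReal_mul (by norm_num : (0 : ℝ) ≤ 4⁻¹), ENNReal.tsum_mul_left,
    tsum_ofReal_inv_pnat_eq_top]
  exact ENNReal.mul_top (by norm_num)

lemma summable_norm_rpow_neg_three_halves :
    Summable fun k : ℕ+ => ‖(((k : ℝ) ^ (-(3 : ℝ) / 2) : ℝ) : ℂ)‖ := by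
  have : Summable fun k : ℕ => (k : ℝ) ^ (-(3 : ℝ) / 2) := Real.summable_nat_rpow.mpr (by norm_num)
  refine (summable_pnat_iff_summable_nat.mpr this).congr fun k => ?_
  rw [Complex.norm_real, Real.norm_of_nonneg (by positivity)]

/-- For nonzero Schwartz `φ` with `𝓕φ` supported in `{|ξ| ≤ 1/4}` and
`f(x) = φ(x) ∑_{k=1}^∞ k^{-3/2} e^{ikx₁}`, the function `f` is in `L¹ ∩ L²` but
`∫ |ξ₁|²|𝓕f(ξ)|² dξ = ∞`; in particular `∫ (1+|ξ|²)|𝓕f(ξ)|² dξ = ∞`, so `f ∉ H¹(ℝⁿ)`. -/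
theorem witness_not_in_H1 (n : ℕ) (hn : 1 ≤ n)
    (φ : SchwartzMap (EuclideanSpace ℝ (Fin n)) ℂ) (hφ0 : φ ≠ 0)
    (hsupp : Function.support (fourierTr (⇑φ)) ⊆ Metric.closedBall 0 (1 / 4)) :
    Integrable
        (fun x : EuclideanSpace ℝ (Fin n) =>
          φ x * ∑' k : ℕ+, (((k : ℝ) ^ (-(3 : ℝ) / 2) : ℝ) : ℂ) *
            Complex.exp (Complex.I * (k : ℝ) * x ⟨0, hn⟩)) volume ∧
      MemLp
        (fun x : EuclideanSpace ℝ (Fin n) =>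
          φ x * ∑' k : ℕ+, (((k : ℝ) ^ (-(3 : ℝ) / 2) : ℝ) : ℂ) *
            Complex.exp (Complex.I * (k : ℝ) * x ⟨0, hn⟩)) 2 volume ∧
      (∫⁻ ξ : EuclideanSpace ℝ (Fin n),
          ENNReal.ofReal ((ξ ⟨0, hn⟩) ^ 2 *
            ‖fourierTr
              (fun x => φ x * ∑' k : ℕ+, (((k : ℝ) ^ (-(3 : ℝ) / 2) : ℝ) : ℂ) *
                Complex.exp (Complex.I * (k : ℝ) * x ⟨0, hn⟩)) ξ‖ ^ 2)) = ⊤ ∧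
      (∫⁻ ξ : EuclideanSpace ℝ (Fin n),
          ENNReal.ofReal ((1 + ‖ξ‖ ^ 2) *
            ‖fourierTr
              (fun x => φ x * ∑' k : ℕ+, (((k : ℝ) ^ (-(3 : ℝ) / 2) : ℝ) : ℂ) *
                Complex.exp (Complex.I * (k : ℝ) * x ⟨0, hn⟩)) ξ‖ ^ 2)) = ⊤ := by
  set i : Fin n := ⟨0, hn⟩
  set c : ℕ+ → ℂ := fun k => (((k : ℝ) ^ (-(3 : ℝ) / 2) : ℝ) : ℂ)
  set v : ℕ+ → EuclideanSpace ℝ (Fin n) := fun k => EuclideanSpace.single i (k : ℝ)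
  have hc : Summable (‖c ·‖) := summable_norm_rpow_neg_three_halves
  have hf : (fun x => φ x * ∑' k : ℕ+, c k * Complex.exp (Complex.I * (k : ℝ) * x i)) =
      fun x => φ x * trigSeries c v x := by
    funext x
    simp [trigSeries, v, EuclideanSpace.inner_single_right, mul_assoc]
  have hdiv : ∫⁻ ξ, ENNReal.ofReal (ξ i ^ 2 * ‖fourierTr (fun x => φ x * trigSeries c v x) ξ‖ ^ 2)
      = ⊤ := by
    simp_rw [fourierTr_mul_trigSeries φ.integrable hc v]
    exact lintegral_mul_sq_norm_tsum_translate_eq_top hsupp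
      (φ.continuous_fourierTr.lintegral_ofReal_sq_norm_ne_zero (φ.fourierTr_ne_zero hφ0))
      (fun j k hjk => (by norm_num : 2 * (1 / 4 : ℝ) < 1).trans_le (one_le_dist_single_pnat i hjk))
      c (fun k ξ hξ => sq_half_le_sq_apply_of_mem_closedBall i
        ((by norm_num : (1 / 2 : ℝ) ≤ 1).trans (Nat.one_le_cast.mpr k.pos)) hξ)
      tsum_ofReal_sq_half_mul_sq_norm_rpow_eq_top
  rw [hf]
  refine ⟨Integrable.mul_trigSeries hc v φ.integrable, MemLp.mul_trigSeries hc v (φ.memLp 2),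
    hdiv, eq_top_mono (lintegral_mono fun ξ => ?_) hdiv⟩
  gcongr
  calc ξ i ^ 2 ≤ ‖ξ‖ ^ 2 := by
        simpa using pow_le_pow_left₀ (norm_nonneg _) (PiLp.norm_apply_le ξ i) 2
    _ ≤ 1 + ‖ξ‖ ^ 2 := le_add_of_nonneg_left zero_le_one
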